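/- arXiv:2505.18187 — 3 statements merged into one kernel-verified Lean document; each statement's English description precedes it below -/
import Mathlib

section
/- For square matrices A and B of size n, and t ≥ 0, the matrix exponential of the 2n×2n block upper-triangular matrix Ξ = [[A, B], [0, A']] times t (where A' is any n×n matrix) has block form [[exp(At), G(t)], [0, exp(A't)]], where G(t) = ∫₀ᵗ exp(A(t−s)) · B · exp(A's) ds. -/
/-!
Put `G(t) = ∫₀ᵗ exp((t-s)A) B exp(sA') ds = exp(tA) ∫₀ᵗ exp(-sA) B exp(sA') ds`. By the product
rule and the fundamental theorem of calculus `G' = A G + B exp(tA')`, so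
`M(t) = [[exp(tA), G(t)], [0, exp(tA')]]` solves `M' = Ξ M` with `M(0) = 1`. Any such solution
equals `exp(tΞ)`, because `exp(-tΞ) M(t)` has derivative zero.
-/

open Matrix NormedSpace

section LinearODE

variable {𝔸 : Type*} [NormedRing 𝔸] [NormedAlgebra ℝ 𝔸] [CompleteSpace 𝔸]

theorem hasDerivAt_exp_neg_smul (a : 𝔸) (t : ℝ) :
    HasDerivAt (fun u : ℝ => exp ((-u) • a)) (-(a * exp ((-t) • a))) t := by
  simpa [Function.comp_def] using (hasDerivAt_exp_smul_const' a (-t)).scomp t (hasDerivAt_neg t)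

theorem eq_exp_smul_of_hasDerivAt {a : 𝔸} {X : ℝ → 𝔸} (hX : ∀ t, HasDerivAt X (a * X t) t)
    (h0 : X 0 = 1) (t : ℝ) : X t = exp (t • a) := by
  have hconst : ∀ u, HasDerivAt (fun u => exp ((-u) • a) * X u) 0 u := fun u => by
    refine ((hasDerivAt_exp_neg_smul a u).mul (hX u)).congr_deriv ?_
    rw [← mul_assoc, ← ((Commute.refl a).smul_right (-u)).exp_right.eq]
    noncomm_ring
  have hleft : exp ((-t) • a) * X t = 1 := by
    simpa [h0] using is_const_of_deriv_eq_zero (fun u => (hconst u).differentiableAt)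
      (fun u => (hconst u).deriv) t 0
  have hinv : exp (t • a) * exp ((-t) • a) = 1 := by
    let : NormedAlgebra ℚ 𝔸 := NormedAlgebra.restrictScalars ℚ ℝ 𝔸
    rw [← NormedSpace.exp_add_of_commute (((Commute.refl a).smul_left t).smul_right (-t)),
      ← add_smul, add_neg_cancel, zero_smul, NormedSpace.exp_zero]
  calc X t = exp (t • a) * (exp ((-t) • a) * X t) := by rw [← mul_assoc, hinv, one_mul]
    _ = exp (t • a) := by rw [hleft, mul_one]

end LinearODE

section VanLoan

open scoped Matrix.Norms.Operator

variable {l m n o : Type*} [Fintype l] [Fintype m] [Fintype n] [Fintype o]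

theorem HasDerivAt.matrix_fromBlocks {P : ℝ → Matrix n l ℝ} {Q : ℝ → Matrix n m ℝ}
    {R : ℝ → Matrix o l ℝ} {S : ℝ → Matrix o m ℝ} {P' Q' R' S'} {t : ℝ}
    (hP : HasDerivAt P P' t) (hQ : HasDerivAt Q Q' t) (hR : HasDerivAt R R' t)
    (hS : HasDerivAt S S' t) :
    HasDerivAt (fun u => fromBlocks (P u) (Q u) (R u) (S u)) (fromBlocks P' Q' R' S') t := by
  let L : (Matrix n l ℝ × Matrix n m ℝ × Matrix o l ℝ × Matrix o m ℝ) →ₗ[ℝ]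
      Matrix (n ⊕ o) (l ⊕ m) ℝ :=
    { toFun := fun p => fromBlocks p.1 p.2.1 p.2.2.1 p.2.2.2
      map_add' := fun p q => (fromBlocks_add ..).symm
      map_smul' := fun c p => (fromBlocks_smul ..).symm }
  exact (LinearMap.toContinuousLinearMap L).hasFDerivAt.comp_hasDerivAt t
    (hP.prodMk (hQ.prodMk (hR.prodMk hS)))

variable [DecidableEq m]

/- The general lemma's `exp` carries the topology of the operator norm; restated here it carries
`Matrix`'s own topology, the one `simp` and `rw` meet in the goals below. -/
theorem Matrix.hasDerivAt_exp_smul_const' (A : Matrix m m ℝ) (t : ℝ) :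
    HasDerivAt (fun u : ℝ => exp (u • A)) (A * exp (t • A)) t :=
  _root_.hasDerivAt_exp_smul_const' A t

theorem Matrix.exp_smul_mul_exp_smul (A : Matrix m m ℝ) (u v : ℝ) :
    exp (u • A) * exp (v • A) = exp ((u + v) • A) := by
  rw [add_smul, Matrix.exp_add_of_commute _ _ (((Commute.refl A).smul_left u).smul_right v)]

theorem differentiable_exp_smul_mul_exp_smul (A B A' : Matrix m m ℝ) {f : ℝ → ℝ}
    (hf : Differentiable ℝ f) : Differentiable ℝ fun s => exp (f s • A) * B * exp (s • A') :=
  (((differentiable_exp_smul_const ℝ A).comp hf).mul_const B).mul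
    (differentiable_exp_smul_const ℝ A')

noncomputable def vanLoanIntegral (A B A' : Matrix m m ℝ) (t : ℝ) : Matrix m m ℝ :=
  ∫ s in (0 : ℝ)..t, exp ((t - s) • A) * B * exp (s • A')

theorem vanLoanIntegral_eq_exp_smul_mul (A B A' : Matrix m m ℝ) (t : ℝ) :
    vanLoanIntegral A B A' t =
      exp (t • A) * ∫ s in (0 : ℝ)..t, exp ((-s) • A) * B * exp (s • A') := by
  have hint := (differentiable_exp_smul_mul_exp_smul A B A' differentiable_neg).continuous
    |>.intervalIntegrable (μ := MeasureTheory.volume) 0 t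
  have hmul := (ContinuousLinearMap.mul ℝ _ (exp (t • A))).intervalIntegral_comp_comm hint
  simp only [ContinuousLinearMap.mul_apply', ← mul_assoc, exp_smul_mul_exp_smul] at hmul
  simp only [vanLoanIntegral, ← hmul, sub_eq_add_neg]

theorem hasDerivAt_vanLoanIntegral (A B A' : Matrix m m ℝ) (t : ℝ) :
    HasDerivAt (vanLoanIntegral A B A') (A * vanLoanIntegral A B A' t + B * exp (t • A')) t := by
  have hK := ((differentiable_exp_smul_mul_exp_smul A B A' differentiable_neg).continuous
    |>.integral_hasStrictDerivAt 0 t).hasDerivAt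
  refine (((Matrix.hasDerivAt_exp_smul_const' A t).mul hK).congr_deriv ?_).congr_of_eventuallyEq
    (.of_forall (vanLoanIntegral_eq_exp_smul_mul A B A'))
  simp only [vanLoanIntegral_eq_exp_smul_mul, ← mul_assoc, exp_smul_mul_exp_smul, add_neg_cancel,
    zero_smul, exp_zero, one_mul]

theorem hasDerivAt_fromBlocks_exp_smul_vanLoanIntegral (A B A' : Matrix m m ℝ) (t : ℝ) :
    HasDerivAt (fun u => fromBlocks (exp (u • A)) (vanLoanIntegral A B A' u) 0 (exp (u • A')))
      (fromBlocks A B 0 A' *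
        fromBlocks (exp (t • A)) (vanLoanIntegral A B A' t) 0 (exp (t • A'))) t := by
  refine ((Matrix.hasDerivAt_exp_smul_const' A t).matrix_fromBlocks
    (hasDerivAt_vanLoanIntegral A B A' t) (hasDerivAt_const t 0)
    (Matrix.hasDerivAt_exp_smul_const' A' t)).congr_deriv ?_
  simp [fromBlocks_multiply]

theorem Matrix.exp_smul_fromBlocks_zero₂₁ (A B A' : Matrix m m ℝ) (t : ℝ) :
    exp (t • fromBlocks A B 0 A') =
      fromBlocks (exp (t • A)) (vanLoanIntegral A B A' t) 0 (exp (t • A')) :=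
  (eq_exp_smul_of_hasDerivAt (hasDerivAt_fromBlocks_exp_smul_vanLoanIntegral A B A')
    (by simp [vanLoanIntegral]) t).symm

theorem vanLoanIntegral_apply (A B A' : Matrix m m ℝ) (t : ℝ) (i j : m) :
    vanLoanIntegral A B A' t i j = ∫ s in (0 : ℝ)..t, (exp ((t - s) • A) * B * exp (s • A')) i j :=
  ((LinearMap.toContinuousLinearMap (entryLinearMap ℝ ℝ i j)).intervalIntegral_comp_comm
    ((differentiable_exp_smul_mul_exp_smul A B A' ((differentiable_const t).sub differentiable_id)
      ).continuous.intervalIntegrable 0 t)).symm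

end VanLoan

theorem vanLoan_two_block_general {n : ℕ} (A B A' : Matrix (Fin n) (Fin n) ℝ) (t : ℝ) :
    NormedSpace.exp (t • Matrix.fromBlocks A B 0 A') =
      Matrix.fromBlocks (NormedSpace.exp (t • A))
        (fun i j => ∫ s in (0:ℝ)..t,
          (NormedSpace.exp ((t - s) • A) * B * NormedSpace.exp (s • A')) i j)
        0 (NormedSpace.exp (t • A')) := by
  rw [exp_smul_fromBlocks_zero₂₁]
  congr
  ext i j
  exact vanLoanIntegral_apply A B A' t i j

/-- For square matrices `A`, `B`, `A'` of size `n` and `t ≥ 0`, the exponential of the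
block upper-triangular matrix `[[A, B], [0, A']]` times `t` is
`[[exp(At), G(t)], [0, exp(A't)]]` where `G(t) = ∫₀ᵗ exp(A(t−s)) B exp(A's) ds`. -/
theorem vanLoan_two_block {n : ℕ} (A B A' : Matrix (Fin n) (Fin n) ℝ) (t : ℝ) (ht : 0 ≤ t) :
    NormedSpace.exp (t • Matrix.fromBlocks A B 0 A') =
      Matrix.fromBlocks (NormedSpace.exp (t • A))
        (fun i j => ∫ s in (0:ℝ)..t,
          (NormedSpace.exp ((t - s) • A) * B * NormedSpace.exp (s • A')) i j)
        0 (NormedSpace.exp (t • A')) :=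
  vanLoan_two_block_general A B A' t
end

section
/- If the 4×4 block upper triangular matrix Ξ has diagonal blocks A₁, A₂, A₃, A₄ and superdiagonal/corner blocks B₁, B₂, B₃, C₁, C₂, D₁ as in Van Loan's theorem, then for t ≥ 0 the (1,2) block of exp(Ξt) equals G₁(t) = ∫₀ᵗ exp(A₁(t−s)) B₁ exp(A₂ s) ds and the (3,4) block equals G₃(t) = ∫₀ᵗ exp(A₃(t−s)) B₃ exp(A₄ s) ds. -/
/-!
Duhamel's formula `exp (t X) - exp (t Y) = ∫₀ᵗ exp ((t - s) X) (X - Y) exp (s Y) ds`, applied to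
`X = [[A, B], [0, D]]` and its block-diagonal part `Y`, has an integrand whose left block column
vanishes, because `X - Y` has `B` as its only nonzero block. The left column of `exp (t X)` is
therefore that of `exp (t Y)`, namely `(exp (t A), 0)`; feeding this back into the integrand gives
`∫₀ᵗ exp ((t - s) A) B exp (s D) ds` as the upper-right block. Applied to the outer 2 × 2 partition
of `Ξ` and then to its two diagonal blocks, this yields `G₁` and `G₃`.
-/

open Matrix NormedSpace

theorem exp_smul_sub_exp_smul_eq_intervalIntegral {𝔸 : Type*} [NormedRing 𝔸] [NormedAlgebra ℝ 𝔸]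
    [CompleteSpace 𝔸] (X Y : 𝔸) (t : ℝ) :
    exp (t • X) - exp (t • Y) = ∫ s in (0 : ℝ)..t, exp ((t - s) • X) * (X - Y) * exp (s • Y) := by
  have hexp (Z : 𝔸) : Continuous fun u : ℝ => exp (u • Z) :=
    continuous_iff_continuousAt.2 fun u => (hasDerivAt_exp_smul_const Z u).continuousAt
  have hderiv (s : ℝ) : HasDerivAt (fun s => exp ((t - s) • X) * exp (s • Y))
      (-(exp ((t - s) • X) * (X - Y) * exp (s • Y))) s := by
    have hX := (hasDerivAt_exp_smul_const X (t - s)).scomp s ((hasDerivAt_id s).const_sub t)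
    refine (hX.fun_mul (hasDerivAt_exp_smul_const' Y s)).congr_deriv ?_
    rw [neg_one_smul]
    noncomm_ring
  have hcont : Continuous fun s : ℝ => exp ((t - s) • X) * (X - Y) * exp (s • Y) :=
    (((hexp X).comp (continuous_const.sub continuous_id)).mul continuous_const).mul (hexp Y)
  have hftc := intervalIntegral.integral_eq_sub_of_hasDerivAt (fun s _ => hderiv s)
    (hcont.neg.intervalIntegrable 0 t)
  rw [intervalIntegral.integral_neg, neg_eq_iff_eq_neg, neg_sub] at hftc
  simpa only [sub_self, sub_zero, zero_smul, exp_zero, one_mul, mul_one] using hftc.symm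

namespace Matrix

open scoped Norms.Operator in
theorem exp_smul_apply_eq_add_intervalIntegral {ι : Type*} [Fintype ι] [DecidableEq ι]
    (X Y : Matrix ι ι ℝ) (t : ℝ) (i j : ι) :
    exp (t • X) i j = exp (t • Y) i j +
      ∫ s in (0 : ℝ)..t, (exp ((t - s) • X) * (X - Y) * exp (s • Y)) i j := by
  have hcont : Continuous fun s : ℝ => exp ((t - s) • X) * (X - Y) * exp (s • Y) := by fun_prop
  let entry := (entryLinearMap ℝ ℝ i j).toContinuousLinearMap
  exact eq_add_of_sub_eq' <|
    (congrArg entry (exp_smul_sub_exp_smul_eq_intervalIntegral X Y t)).trans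
      (entry.intervalIntegral_comp_comm (hcont.intervalIntegrable 0 t)).symm

variable {m n : Type*} [Fintype m] [DecidableEq m] [Fintype n] [DecidableEq n]

open scoped Norms.Operator in
theorem exp_fromBlocks_zero_zero (A : Matrix m m ℝ) (D : Matrix n n ℝ) :
    exp (fromBlocks A 0 0 D) = fromBlocks (exp A) 0 0 (exp D) := by
  let f : Matrix m m ℝ × Matrix n n ℝ →+* Matrix (m ⊕ n) (m ⊕ n) ℝ :=
    { toFun := fun p => fromBlocks p.1 0 0 p.2
      map_one' := fromBlocks_one
      map_mul' := fun p q => by simp [fromBlocks_multiply]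
      map_zero' := fromBlocks_zero
      map_add' := fun p q => by simp [fromBlocks_add] }
  have hf : Continuous f :=
    continuous_fst.matrix_fromBlocks continuous_const continuous_const continuous_snd
  have h := (map_exp f hf (A, D)).symm
  simp only [f, RingHom.coe_mk, MonoidHom.coe_mk, OneHom.coe_mk, Prod.fst_exp, Prod.snd_exp] at h
  exact h

theorem mul_fromBlocks_zero_mul_fromBlocks_zero {R : Type*} [Semiring R]
    (P : Matrix (m ⊕ n) (m ⊕ n) R) (B : Matrix m n R) (E : Matrix m m R) (F : Matrix n n R) :
    P * fromBlocks 0 B 0 0 * fromBlocks E 0 0 F =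
      fromBlocks 0 (P.toBlocks₁₁ * B * F) 0 (P.toBlocks₂₁ * B * F) := by
  rw [← fromBlocks_toBlocks P, fromBlocks_multiply, fromBlocks_multiply]
  simp [Matrix.mul_assoc]

variable (A : Matrix m m ℝ) (B : Matrix m n ℝ) (D : Matrix n n ℝ) (t : ℝ)

theorem exp_smul_fromBlocks_apply (i j : m ⊕ n) :
    exp (t • fromBlocks A B 0 D) i j =
      fromBlocks (exp (t • A)) 0 0 (exp (t • D)) i j +
        ∫ s in (0 : ℝ)..t,
          fromBlocks 0 ((exp ((t - s) • fromBlocks A B 0 D)).toBlocks₁₁ * B * exp (s • D))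
            0 ((exp ((t - s) • fromBlocks A B 0 D)).toBlocks₂₁ * B * exp (s • D)) i j := by
  have hexp (s : ℝ) :
      exp (s • fromBlocks A 0 0 D) = fromBlocks (exp (s • A)) 0 0 (exp (s • D)) := by
    simp [fromBlocks_smul, exp_fromBlocks_zero_zero]
  have hsub : fromBlocks A B 0 D - fromBlocks A 0 0 D = fromBlocks 0 B 0 0 := by
    rw [sub_eq_iff_eq_add, fromBlocks_add]
    simp
  rw [exp_smul_apply_eq_add_intervalIntegral _ (fromBlocks A 0 0 D)]
  simp only [hexp, hsub, mul_fromBlocks_zero_mul_fromBlocks_zero]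

theorem toBlocks₂₁_exp_smul_fromBlocks : (exp (t • fromBlocks A B 0 D)).toBlocks₂₁ = 0 := by
  ext i j
  simpa [toBlocks₂₁] using exp_smul_fromBlocks_apply A B D t (.inr i) (.inl j)

theorem toBlocks₁₁_exp_smul_fromBlocks :
    (exp (t • fromBlocks A B 0 D)).toBlocks₁₁ = exp (t • A) := by
  ext i j
  simpa [toBlocks₁₁] using exp_smul_fromBlocks_apply A B D t (.inl i) (.inl j)

theorem toBlocks₂₂_exp_smul_fromBlocks :
    (exp (t • fromBlocks A B 0 D)).toBlocks₂₂ = exp (t • D) := by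
  ext i j
  simpa [toBlocks₂₂, toBlocks₂₁_exp_smul_fromBlocks] using
    exp_smul_fromBlocks_apply A B D t (.inr i) (.inr j)

theorem toBlocks₁₂_exp_smul_fromBlocks :
    (exp (t • fromBlocks A B 0 D)).toBlocks₁₂ =
      of fun i j => ∫ s in (0 : ℝ)..t, (exp ((t - s) • A) * B * exp (s • D)) i j := by
  ext i j
  simpa [toBlocks₁₂, toBlocks₁₁_exp_smul_fromBlocks] using
    exp_smul_fromBlocks_apply A B D t (.inl i) (.inr j)

end Matrix

theorem vanLoan_G1_G3_general {n₁ n₂ n₃ n₄ : ℕ}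
    (A₁ : Matrix (Fin n₁) (Fin n₁) ℝ) (A₂ : Matrix (Fin n₂) (Fin n₂) ℝ)
    (A₃ : Matrix (Fin n₃) (Fin n₃) ℝ) (A₄ : Matrix (Fin n₄) (Fin n₄) ℝ)
    (B₁ : Matrix (Fin n₁) (Fin n₂) ℝ) (B₂ : Matrix (Fin n₂) (Fin n₃) ℝ)
    (B₃ : Matrix (Fin n₃) (Fin n₄) ℝ)
    (C₁ : Matrix (Fin n₁) (Fin n₃) ℝ) (C₂ : Matrix (Fin n₂) (Fin n₄) ℝ)
    (D₁ : Matrix (Fin n₁) (Fin n₄) ℝ) (t : ℝ) :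
    (fun i j => NormedSpace.exp (t • Matrix.fromBlocks
          (Matrix.fromBlocks A₁ B₁ 0 A₂) (Matrix.fromBlocks C₁ D₁ B₂ C₂)
          0 (Matrix.fromBlocks A₃ B₃ 0 A₄))
        (Sum.inl (Sum.inl i)) (Sum.inl (Sum.inr j))) =
      (fun i j => ∫ s in (0:ℝ)..t,
        (NormedSpace.exp ((t - s) • A₁) * B₁ * NormedSpace.exp (s • A₂)) i j :
        Matrix (Fin n₁) (Fin n₂) ℝ) ∧
    (fun i j => NormedSpace.exp (t • Matrix.fromBlocks
          (Matrix.fromBlocks A₁ B₁ 0 A₂) (Matrix.fromBlocks C₁ D₁ B₂ C₂)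
          0 (Matrix.fromBlocks A₃ B₃ 0 A₄))
        (Sum.inr (Sum.inl i)) (Sum.inr (Sum.inr j))) =
      (fun i j => ∫ s in (0:ℝ)..t,
        (NormedSpace.exp ((t - s) • A₃) * B₃ * NormedSpace.exp (s • A₄)) i j :
        Matrix (Fin n₃) (Fin n₄) ℝ) := by
  set Ξ₁₁ := fromBlocks A₁ B₁ 0 A₂
  set Ξ₁₂ := fromBlocks C₁ D₁ B₂ C₂
  set Ξ₂₂ := fromBlocks A₃ B₃ 0 A₄
  have h₁₂ := congrArg toBlocks₁₂ (toBlocks₁₁_exp_smul_fromBlocks Ξ₁₁ Ξ₁₂ Ξ₂₂ t)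
  have h₃₄ := congrArg toBlocks₁₂ (toBlocks₂₂_exp_smul_fromBlocks Ξ₁₁ Ξ₁₂ Ξ₂₂ t)
  rw [toBlocks₁₂_exp_smul_fromBlocks] at h₁₂ h₃₄
  exact ⟨h₁₂, h₃₄⟩

/-- Van Loan's theorem, (1,2) and (3,4) blocks: for the 4×4 block upper triangular `Ξ`,
the (1,2) block of `exp(Ξ t)` is `G₁(t) = ∫₀ᵗ exp(A₁(t−s)) B₁ exp(A₂ s) ds` and the
(3,4) block is `G₃(t) = ∫₀ᵗ exp(A₃(t−s)) B₃ exp(A₄ s) ds`. -/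
theorem vanLoan_G1_G3 {n₁ n₂ n₃ n₄ : ℕ}
    (A₁ : Matrix (Fin n₁) (Fin n₁) ℝ) (A₂ : Matrix (Fin n₂) (Fin n₂) ℝ)
    (A₃ : Matrix (Fin n₃) (Fin n₃) ℝ) (A₄ : Matrix (Fin n₄) (Fin n₄) ℝ)
    (B₁ : Matrix (Fin n₁) (Fin n₂) ℝ) (B₂ : Matrix (Fin n₂) (Fin n₃) ℝ)
    (B₃ : Matrix (Fin n₃) (Fin n₄) ℝ)
    (C₁ : Matrix (Fin n₁) (Fin n₃) ℝ) (C₂ : Matrix (Fin n₂) (Fin n₄) ℝ)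
    (D₁ : Matrix (Fin n₁) (Fin n₄) ℝ) (t : ℝ) (ht : 0 ≤ t) :
    (fun i j => NormedSpace.exp (t • Matrix.fromBlocks
          (Matrix.fromBlocks A₁ B₁ 0 A₂) (Matrix.fromBlocks C₁ D₁ B₂ C₂)
          0 (Matrix.fromBlocks A₃ B₃ 0 A₄))
        (Sum.inl (Sum.inl i)) (Sum.inl (Sum.inr j))) =
      (fun i j => ∫ s in (0:ℝ)..t,
        (NormedSpace.exp ((t - s) • A₁) * B₁ * NormedSpace.exp (s • A₂)) i j :
        Matrix (Fin n₁) (Fin n₂) ℝ) ∧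
    (fun i j => NormedSpace.exp (t • Matrix.fromBlocks
          (Matrix.fromBlocks A₁ B₁ 0 A₂) (Matrix.fromBlocks C₁ D₁ B₂ C₂)
          0 (Matrix.fromBlocks A₃ B₃ 0 A₄))
        (Sum.inr (Sum.inl i)) (Sum.inr (Sum.inr j))) =
      (fun i j => ∫ s in (0:ℝ)..t,
        (NormedSpace.exp ((t - s) • A₃) * B₃ * NormedSpace.exp (s • A₄)) i j :
        Matrix (Fin n₃) (Fin n₄) ℝ) :=
  vanLoan_G1_G3_general A₁ A₂ A₃ A₄ B₁ B₂ B₃ C₁ C₂ D₁ t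
end

section
/- If A₂ = −A₁ᵀ in a block upper triangular matrix Ξ = [[A₁, B₁],[0, −A₁ᵀ]] with B₁ symmetric, then the matrix P(t) = Υ₁₂(t) Υ₁₁(t)ᵀ is symmetric for all t, where Υ₁₁(t) and Υ₁₂(t) are the top blocks of exp(Ξt). -/
/-!
Since `exp(-sA₁ᵀ) exp(tA₁)ᵀ = exp((t-s)A₁)ᵀ`, the factor `Υ₁₁(t)ᵀ` can be moved under the
integral, which turns the integrand into the congruence `exp((t-s)A₁) B₁ exp((t-s)A₁)ᵀ` of the
symmetric matrix `B₁`. So `P(t)` is an integral of symmetric matrices.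
-/

open Matrix

namespace Matrix

variable {m n p 𝕂 : Type*}

theorem IsSymm.mul_mul_transpose [Fintype n] [CommSemiring 𝕂] {B : Matrix n n 𝕂} (hB : B.IsSymm)
    (M : Matrix m n 𝕂) : (M * B * Mᵀ).IsSymm := by
  rw [IsSymm, transpose_mul, transpose_mul, transpose_transpose, hB.eq, Matrix.mul_assoc]

section Exponential

variable [Fintype m] [DecidableEq m] [RCLike 𝕂]

theorem continuous_exp : Continuous (NormedSpace.exp : Matrix m m 𝕂 → Matrix m m 𝕂) :=
  open scoped Norms.Operator in NormedSpace.exp_continuous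

theorem exp_neg_smul_mul_exp_smul (A : Matrix m m 𝕂) (s t : 𝕂) :
    NormedSpace.exp (-(s • A)) * NormedSpace.exp (t • A) = NormedSpace.exp ((t - s) • A) := by
  rw [← exp_add_of_commute _ _ (((Commute.refl A).smul_left s).smul_right t).neg_left, sub_smul,
    neg_add_eq_sub]

theorem exp_neg_smul_transpose_mul_transpose_exp_smul (A : Matrix m m 𝕂) (s t : 𝕂) :
    NormedSpace.exp (-(s • Aᵀ)) * (NormedSpace.exp (t • A))ᵀ =
      (NormedSpace.exp ((t - s) • A))ᵀ := by
  rw [← exp_transpose, ← exp_transpose, transpose_smul, transpose_smul, exp_neg_smul_mul_exp_smul]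

end Exponential

section IntervalIntegral

variable [RCLike 𝕂] {a b : ℝ}

theorem of_intervalIntegral_mul [Fintype n] {F : ℝ → Matrix m n 𝕂}
    (hF : ∀ i j, IntervalIntegrable (fun s => F s i j) MeasureTheory.volume a b)
    (M : Matrix n p 𝕂) :
    (of fun i j => ∫ s in a..b, F s i j) * M = of fun i k => ∫ s in a..b, (F s * M) i k := by
  ext i k
  simp only [mul_apply, of_apply]
  rw [intervalIntegral.integral_finsetSum fun j _ => (hF i j).mul_const (M j k)]
  simp only [intervalIntegral.integral_mul_const]

theorem isSymm_of_intervalIntegral {F : ℝ → Matrix n n 𝕂} (hF : ∀ s, (F s).IsSymm) :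
    (of fun i j => ∫ s in a..b, F s i j).IsSymm :=
  IsSymm.ext fun i j => by simp only [of_apply, (hF _).apply]

end IntervalIntegral

end Matrix

/-- If `Ξ = [[A₁, B₁], [0, −A₁ᵀ]]` with `B₁` symmetric, then
`P(t) = Υ₁₂(t) Υ₁₁(t)ᵀ` is symmetric for all `t`, where `Υ₁₁(t) = exp(A₁ t)` and
`Υ₁₂(t) = ∫₀ᵗ exp(A₁(t−s)) B₁ exp(−A₁ᵀ s) ds`. -/
theorem vanLoan_P_symm {n : ℕ} (A₁ B₁ : Matrix (Fin n) (Fin n) ℝ) (hB₁ : B₁.IsSymm) (t : ℝ) :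
    Matrix.IsSymm
      ((Matrix.of fun i j => ∫ s in (0:ℝ)..t,
          (NormedSpace.exp ((t - s) • A₁) * B₁ * NormedSpace.exp (-(s • A₁ᵀ))) i j) * (NormedSpace.exp (t • A₁))ᵀ) := by
  have hcont : Continuous fun s : ℝ =>
      NormedSpace.exp ((t - s) • A₁) * B₁ * NormedSpace.exp (-(s • A₁ᵀ)) := by
    have hexp := continuous_exp (m := Fin n) (𝕂 := ℝ)
    fun_prop
  rw [of_intervalIntegral_mul fun i j => (hcont.matrix_elem i j).intervalIntegrable 0 t]
  refine isSymm_of_intervalIntegral fun s => ?_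
  rw [mul_assoc, exp_neg_smul_transpose_mul_transpose_exp_smul]
  exact hB₁.mul_mul_transpose _
end
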